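/- In a hyperbolic group, any finite product A₁A₂⋯Aₙ of quasiconvex subsets is quasiconvex. -/

import Mathlib

open Pointwise

variable {G : Type*} [Group G]

/-- Word length of `g` with respect to a (symmetrized) generating set `S`. -/
noncomputable def wordLength (S : Set G) (g : G) : ℕ :=
  sInf {n | ∃ l : List G, (∀ x ∈ l, x ∈ S) ∧ l.length = n ∧ l.prod = g}

/-- Word metric (distance in the Cayley graph). -/
noncomputable def wdist (S : Set G) (g h : G) : ℕ := wordLength S (g⁻¹ * h)

/-- A discrete geodesic of length `n` in the Cayley graph of `G` w.r.t. `S`. -/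
def IsGeodesic (S : Set G) (p : ℕ → G) (n : ℕ) : Prop :=
  ∀ i j : ℕ, i ≤ j → j ≤ n → wdist S (p i) (p j) = j - i

/-- `Q` is `ε`-quasiconvex: every geodesic between two elements of `Q`
lies in the closed `ε`-neighborhood of `Q`. -/
def IsQuasiconvex (S : Set G) (ε : ℝ) (Q : Set G) : Prop :=
  ∀ (p : ℕ → G) (n : ℕ), IsGeodesic S p n → p 0 ∈ Q → p n ∈ Q →
    ∀ i ≤ n, ∃ q ∈ Q, (wdist S (p i) q : ℝ) ≤ ε

/-- All geodesic triangles in the Cayley graph are `δ`-slim. -/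
def SlimTriangles (S : Set G) (δ : ℝ) : Prop :=
  ∀ (p q r : ℕ → G) (np nq nr : ℕ),
    IsGeodesic S p np → IsGeodesic S q nq → IsGeodesic S r nr →
    p np = q 0 → r 0 = p 0 → r nr = q nq →
    ∀ i ≤ nr, ∃ j : ℕ, (j ≤ np ∧ (wdist S (r i) (p j) : ℝ) ≤ δ) ∨
                       (j ≤ nq ∧ (wdist S (r i) (q j) : ℝ) ≤ δ)

section Basic

variable {S : Set G}

lemma exists_word (hSsym : S⁻¹ = S) (hSgen : Subgroup.closure S = ⊤) (g : G) :
    ∃ l : List G, (∀ x ∈ l, x ∈ S) ∧ l.prod = g := by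
  have hg : g ∈ Subgroup.closure S := hSgen ▸ Subgroup.mem_top g
  induction hg using Subgroup.closure_induction with
  | mem x hx => exact ⟨[x], by simp [hx], by simp⟩
  | one => exact ⟨[], by simp, by simp⟩
  | mul x y _ _ hx hy =>
      obtain ⟨l₁, h₁, e₁⟩ := hx
      obtain ⟨l₂, h₂, e₂⟩ := hy
      refine ⟨l₁ ++ l₂, ?_, by simp [e₁, e₂]⟩
      intro z hz
      rcases List.mem_append.mp hz with h | h
      · exact h₁ z h
      · exact h₂ z h
  | inv x _ hx =>
      obtain ⟨l, h, e⟩ := hx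
      refine ⟨l.reverse.map (fun x => x⁻¹), ?_, by rw [← e, List.prod_inv_reverse, List.map_reverse]⟩
      intro z hz
      simp only [List.mem_map, List.mem_reverse] at hz
      obtain ⟨y, hy, rfl⟩ := hz
      have : y⁻¹ ∈ S⁻¹ := by simp [Set.mem_inv, h y hy]
      rwa [hSsym] at this

lemma wordLength_set_nonempty (hSsym : S⁻¹ = S) (hSgen : Subgroup.closure S = ⊤) (g : G) :
    {n | ∃ l : List G, (∀ x ∈ l, x ∈ S) ∧ l.length = n ∧ l.prod = g}.Nonempty := by
  obtain ⟨l, hl, he⟩ := exists_word hSsym hSgen g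
  exact ⟨l.length, l, hl, rfl, he⟩

lemma wordLength_spec (hSsym : S⁻¹ = S) (hSgen : Subgroup.closure S = ⊤) (g : G) :
    ∃ l : List G, (∀ x ∈ l, x ∈ S) ∧ l.length = wordLength S g ∧ l.prod = g :=
  Nat.sInf_mem (wordLength_set_nonempty hSsym hSgen g)

lemma wordLength_le {g : G} {l : List G} (hl : ∀ x ∈ l, x ∈ S) (he : l.prod = g) :
    wordLength S g ≤ l.length :=
  Nat.sInf_le ⟨l, hl, rfl, he⟩

lemma wordLength_one : wordLength S 1 = 0 :=
  Nat.le_zero.mp (wordLength_le (l := []) (by simp) (by simp))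

lemma wordLength_mul_le (hSsym : S⁻¹ = S) (hSgen : Subgroup.closure S = ⊤) (g h : G) :
    wordLength S (g * h) ≤ wordLength S g + wordLength S h := by
  obtain ⟨l₁, h₁, len₁, e₁⟩ := wordLength_spec hSsym hSgen g
  obtain ⟨l₂, h₂, len₂, e₂⟩ := wordLength_spec hSsym hSgen h
  have := wordLength_le (S := S) (g := g * h) (l := l₁ ++ l₂)
    (by intro z hz; rcases List.mem_append.mp hz with hh | hh; exacts [h₁ z hh, h₂ z hh])
    (by simp [e₁, e₂])
  simpa [len₁, len₂] using this

lemma wordLength_inv_le (hSsym : S⁻¹ = S) (hSgen : Subgroup.closure S = ⊤) (g : G) :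
    wordLength S g⁻¹ ≤ wordLength S g := by
  obtain ⟨l, hl, len, e⟩ := wordLength_spec hSsym hSgen g
  have := wordLength_le (S := S) (g := g⁻¹) (l := l.reverse.map (fun x => x⁻¹))
    (by
      intro z hz
      simp only [List.mem_map, List.mem_reverse] at hz
      obtain ⟨y, hy, rfl⟩ := hz
      have : y⁻¹ ∈ S⁻¹ := by simp [Set.mem_inv, hl y hy]
      rwa [hSsym] at this)
    (by rw [← e, List.prod_inv_reverse, List.map_reverse])
  simpa [len] using this

lemma wordLength_inv (hSsym : S⁻¹ = S) (hSgen : Subgroup.closure S = ⊤) (g : G) :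
    wordLength S g⁻¹ = wordLength S g := by
  refine le_antisymm (wordLength_inv_le hSsym hSgen g) ?_
  simpa using wordLength_inv_le hSsym hSgen g⁻¹

lemma wdist_self (g : G) : wdist S g g = 0 := by
  simp [wdist, wordLength_one]

lemma wdist_comm (hSsym : S⁻¹ = S) (hSgen : Subgroup.closure S = ⊤) (g h : G) :
    wdist S g h = wdist S h g := by
  unfold wdist
  rw [← wordLength_inv hSsym hSgen]
  simp [mul_inv_rev]

lemma wdist_triangle (hSsym : S⁻¹ = S) (hSgen : Subgroup.closure S = ⊤) (g h k : G) :
    wdist S g k ≤ wdist S g h + wdist S h k := by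
  have : g⁻¹ * k = (g⁻¹ * h) * (h⁻¹ * k) := by group
  unfold wdist
  rw [this]
  exact wordLength_mul_le hSsym hSgen _ _

lemma wdist_mul_left (a g h : G) : wdist S (a * g) (a * h) = wdist S g h := by
  unfold wdist
  congr 1
  group

lemma eq_of_wdist_eq_zero (hSsym : S⁻¹ = S) (hSgen : Subgroup.closure S = ⊤) {g h : G}
    (hd : wdist S g h = 0) : g = h := by
  obtain ⟨l, hl, len, e⟩ := wordLength_spec hSsym hSgen (g⁻¹ * h)
  rw [show wordLength S (g⁻¹*h) = wdist S g h from rfl, hd] at len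
  have : l = [] := List.length_eq_zero_iff.mp len
  subst this
  simp at e
  have : g * (g⁻¹ * h) = g * 1 := by rw [← e]
  simpa [mul_assoc] using this.symm

end Basic

section Geo

variable {S : Set G}

lemma exists_geodesic (hSsym : S⁻¹ = S) (hSgen : Subgroup.closure S = ⊤) (g h : G) :
    ∃ p : ℕ → G, IsGeodesic S p (wdist S g h) ∧ p 0 = g ∧ p (wdist S g h) = h := by
  obtain ⟨l, hl, len, e⟩ := wordLength_spec hSsym hSgen (g⁻¹ * h)
  have len' : l.length = wdist S g h := len
  set d := wdist S g h with hd
  refine ⟨fun i => g * (l.take i).prod, ?_, by simp, ?_⟩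
  · -- geodesic
    intro i j hij hj
    show wdist S (g * (l.take i).prod) (g * (l.take j).prod) = j - i
    have key : ∀ i j : ℕ, i ≤ j → j ≤ d →
        wdist S (g * (l.take i).prod) (g * (l.take j).prod) ≤ j - i := by
      intro i j hij hj
      rw [wdist_mul_left]
      have hsplit : l.take j = l.take i ++ (l.drop i).take (j - i) := by
        rw [← List.take_add, Nat.add_sub_cancel' hij]
      have : ((l.take i).prod)⁻¹ * (l.take j).prod = ((l.drop i).take (j - i)).prod := by
        rw [hsplit, List.prod_append]
        group
      unfold wdist
      rw [this]
      have := wordLength_le (S := S) (g := ((l.drop i).take (j - i)).prod)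
        (l := (l.drop i).take (j - i))
        (by
          intro z hz
          exact hl z (List.mem_of_mem_drop (List.mem_of_mem_take hz)))
        rfl
      calc wordLength S ((l.drop i).take (j-i)).prod ≤ ((l.drop i).take (j-i)).length := this
        _ ≤ j - i := by simp [List.length_take]
    refine Nat.le_antisymm (key i j hij hj) ?_
    -- lower bound
    have h1 : wdist S g (g * (l.take i).prod) ≤ i := by
      have := key 0 i (Nat.zero_le _) (le_trans hij hj)
      simpa using this
    have h2 : wdist S (g * (l.take j).prod) h ≤ d - j := by
      have e2 : g⁻¹ * h = (l.take j).prod * (l.drop j).prod := by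
        rw [← List.prod_append, List.take_append_drop, e]
      have : ((l.take j).prod)⁻¹ * (g⁻¹ * h) = (l.drop j).prod := by
        rw [e2]; group
      unfold wdist
      rw [show (g * (l.take j).prod)⁻¹ * h = ((l.take j).prod)⁻¹ * (g⁻¹ * h) by group, this]
      have := wordLength_le (S := S) (g := (l.drop j).prod) (l := l.drop j)
        (fun z hz => hl z (List.mem_of_mem_drop hz)) rfl
      calc wordLength S (l.drop j).prod ≤ (l.drop j).length := this
        _ = l.length - j := by simp
        _ = d - j := by rw [len']
    have htri : d ≤ wdist S g (g * (l.take i).prod)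
        + wdist S (g * (l.take i).prod) (g * (l.take j).prod)
        + wdist S (g * (l.take j).prod) h := by
      calc d = wdist S g h := hd
        _ ≤ wdist S g (g * (l.take j).prod) + wdist S (g * (l.take j).prod) h :=
            wdist_triangle hSsym hSgen _ _ _
        _ ≤ (wdist S g (g * (l.take i).prod)
              + wdist S (g * (l.take i).prod) (g * (l.take j).prod))
            + wdist S (g * (l.take j).prod) h := by
            gcongr
            exact wdist_triangle hSsym hSgen _ _ _
    omega
  · show g * (l.take d).prod = h
    have : l.take d = l := by rw [← len']; exact List.take_length
    rw [this, e]
    group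

lemma IsGeodesic.wdist_points {p : ℕ → G} {n : ℕ} (hp : IsGeodesic S p n)
    {i j : ℕ} (hij : i ≤ j) (hj : j ≤ n) : wdist S (p i) (p j) = j - i := hp i j hij hj

end Geo

/-- Every point of every geodesic from `x` to `y` lies within `c` of `T`. -/
def Good (S : Set G) (c : ℝ) (x y : G) (T : Set G) : Prop :=
  ∀ (p : ℕ → G) (n : ℕ), IsGeodesic S p n → p 0 = x → p n = y →
    ∀ i ≤ n, ∃ q ∈ T, (wdist S (p i) q : ℝ) ≤ c

section GoodLemmas

variable {S : Set G} {δ : ℝ}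

lemma Good.mono_c {c c' : ℝ} {x y : G} {T : Set G} (h : Good S c x y T) (hcc : c ≤ c') :
    Good S c' x y T := by
  intro p n hp h0 hn i hi
  obtain ⟨q, hq, hd⟩ := h p n hp h0 hn i hi
  exact ⟨q, hq, hd.trans hcc⟩

lemma Good.mono_set (hSsym : S⁻¹ = S) (hSgen : Subgroup.closure S = ⊤)
    {c d : ℝ} {x y : G} {T T' : Set G}
    (hTT : ∀ t ∈ T, ∃ t' ∈ T', (wdist S t t' : ℝ) ≤ d) (h : Good S c x y T) :
    Good S (c + d) x y T' := by
  intro p n hp h0 hn i hi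
  obtain ⟨q, hq, hd⟩ := h p n hp h0 hn i hi
  obtain ⟨q', hq', hd'⟩ := hTT q hq
  refine ⟨q', hq', ?_⟩
  have tri : (wdist S (p i) q' : ℝ) ≤ (wdist S (p i) q : ℝ) + (wdist S q q' : ℝ) := by
    exact_mod_cast wdist_triangle hSsym hSgen (p i) q q'
  linarith

lemma Good.trans (hSsym : S⁻¹ = S) (hSgen : Subgroup.closure S = ⊤)
    (hslim : SlimTriangles S δ)
    {c₁ c₂ : ℝ} {x v y : G} {T : Set G}
    (h₁ : Good S c₁ x v T) (h₂ : Good S c₂ v y T) :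
    Good S (δ + max c₁ c₂) x y T := by
  intro r n hr h0 hn i hi
  obtain ⟨p, hp, hp0, hpn⟩ := exists_geodesic hSsym hSgen x v
  obtain ⟨q, hq, hq0, hqn⟩ := exists_geodesic hSsym hSgen v y
  obtain ⟨j, hj⟩ := hslim p q r _ _ _ hp hq hr (by rw [hpn, hq0]) (by rw [h0, hp0])
    (by rw [hn, hqn]) i hi
  rcases hj with ⟨hjle, hjd⟩ | ⟨hjle, hjd⟩
  · obtain ⟨t, ht, htd⟩ := h₁ p _ hp hp0 hpn j hjle
    refine ⟨t, ht, ?_⟩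
    have tri : (wdist S (r i) t : ℝ) ≤ (wdist S (r i) (p j) : ℝ) + (wdist S (p j) t : ℝ) := by
      exact_mod_cast wdist_triangle hSsym hSgen (r i) (p j) t
    have : c₁ ≤ max c₁ c₂ := le_max_left _ _
    linarith
  · obtain ⟨t, ht, htd⟩ := h₂ q _ hq hq0 hqn j hjle
    refine ⟨t, ht, ?_⟩
    have tri : (wdist S (r i) t : ℝ) ≤ (wdist S (r i) (q j) : ℝ) + (wdist S (q j) t : ℝ) := by
      exact_mod_cast wdist_triangle hSsym hSgen (r i) (q j) t
    have : c₂ ≤ max c₁ c₂ := le_max_right _ _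
    linarith

lemma good_endpoint_left (hSsym : S⁻¹ = S) (hSgen : Subgroup.closure S = ⊤) (x y : G) :
    Good S (wdist S x y : ℝ) x y {x} := by
  intro p n hp h0 hn i hi
  refine ⟨x, rfl, ?_⟩
  have h1 : wdist S (p i) (p 0) = i := by
    rw [wdist_comm hSsym hSgen]
    simpa using hp 0 i (Nat.zero_le _) hi
  have h2 : wdist S x y = n := by
    rw [← h0, ← hn]; simpa using hp 0 n (Nat.zero_le _) le_rfl
  have h1' : wdist S (p i) x = i := by rw [← h0]; exact h1
  rw [h1', h2]
  exact_mod_cast hi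

lemma good_translate {c : ℝ} {x y : G} {T : Set G} (g : G) (h : Good S c x y T) :
    Good S c (g * x) (g * y) ((fun t => g * t) '' T) := by
  intro p n hp h0 hn i hi
  have hp' : IsGeodesic S (fun i => g⁻¹ * p i) n := by
    intro i j hij hj
    rw [wdist_mul_left]
    exact hp i j hij hj
  obtain ⟨t, ht, htd⟩ := h (fun i => g⁻¹ * p i) n hp'
    (by simp [h0]) (by simp [hn]) i hi
  refine ⟨g * t, ⟨t, ht, rfl⟩, ?_⟩
  rw [show p i = g * (g⁻¹ * p i) by group]
  rw [wdist_mul_left]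
  exact htd

lemma isQuasiconvex_of_good {ε : ℝ} {Q : Set G}
    (h : ∀ x ∈ Q, ∀ y ∈ Q, Good S ε x y Q) : IsQuasiconvex S ε Q := by
  intro p n hp h0 hn i hi
  exact h (p 0) h0 (p n) hn p n hp rfl rfl i hi

lemma IsQuasiconvex.good {ε : ℝ} {Q : Set G} (h : IsQuasiconvex S ε Q)
    {x y : G} (hx : x ∈ Q) (hy : y ∈ Q) : Good S ε x y Q := by
  intro p n hp h0 hn i hi
  exact h p n hp (h0 ▸ hx) (hn ▸ hy) i hi

end GoodLemmas

section Main

variable {S : Set G} {δ : ℝ}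

lemma good_endpoint_right (hSsym : S⁻¹ = S) (hSgen : Subgroup.closure S = ⊤) (x y : G) :
    Good S (wdist S x y : ℝ) x y {y} := by
  intro p n hp h0 hn i hi
  refine ⟨y, rfl, ?_⟩
  have h1 : wdist S (p i) y = n - i := by rw [← hn]; exact hp i n hi le_rfl
  have h2 : wdist S x y = n := by
    rw [← h0, ← hn]; simpa using hp 0 n (Nat.zero_le _) le_rfl
  rw [h1, h2]
  exact_mod_cast Nat.sub_le n i

lemma prod_two (hSsym : S⁻¹ = S) (hSgen : Subgroup.closure S = ⊤)
    (hδ : 0 ≤ δ) (hslim : SlimTriangles S δ)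
    {ε₁ ε₂ : ℝ} (hε₁ : 0 ≤ ε₁) (hε₂ : 0 ≤ ε₂) {A B : Set G}
    (h₁ : IsQuasiconvex S ε₁ A) (h₂ : IsQuasiconvex S ε₂ B) :
    ∃ ε : ℝ, 0 ≤ ε ∧ IsQuasiconvex S ε {x : G | ∃ a ∈ A, ∃ b ∈ B, x = a * b} := by
  by_cases hB : B.Nonempty
  swap
  · refine ⟨0, le_rfl, ?_⟩
    intro p n hp h0 hn i hi
    exfalso
    obtain ⟨a, _, b, hb, _⟩ := h0
    exact hB ⟨b, hb⟩
  obtain ⟨b₀, hb₀⟩ := hB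
  set L : ℝ := (wordLength S b₀ : ℝ) with hL
  have hL0 : 0 ≤ L := by positivity
  set C : ℝ := ε₁ + ε₂ + L with hC
  have hC0 : 0 ≤ C := by positivity
  refine ⟨4 * δ + C, by positivity, ?_⟩
  set P : Set G := {x : G | ∃ a ∈ A, ∃ b ∈ B, x = a * b} with hP
  apply isQuasiconvex_of_good
  rintro x ⟨a, ha, b, hb, rfl⟩ y ⟨a', ha', b', hb', rfl⟩
  -- distance facts
  have hwb : ∀ t : G, wdist S t (t * b₀) = wordLength S b₀ := by
    intro t; unfold wdist; congr 1; group
  have hwb' : ∀ t : G, wdist S (t * b₀) t = wordLength S b₀ := by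
    intro t; rw [wdist_comm hSsym hSgen]; exact hwb t
  -- side 1 : from a*b to a*b₀, within ε₂ of P
  have good₁ : Good S C (a * b) (a * b₀) P := by
    have g0 : Good S ε₂ b b₀ B := h₂.good hb hb₀
    have g1 := good_translate a g0
    have g2 : Good S (ε₂ + 0) (a * b) (a * b₀) P := by
      refine Good.mono_set hSsym hSgen ?_ g1
      rintro t ⟨tb, htb, rfl⟩
      exact ⟨a * tb, ⟨a, ha, tb, htb, rfl⟩, by simp [wdist_self]⟩
    exact g2.mono_c (by linarith)
  -- side 2 : from a*b₀ to a, within L of P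
  have good₂ : Good S C (a * b₀) a P := by
    have g0 : Good S (wdist S (a * b₀) a : ℝ) (a * b₀) a {a * b₀} :=
      good_endpoint_left hSsym hSgen _ _
    have g1 : Good S ((wdist S (a * b₀) a : ℝ) + 0) (a * b₀) a P := by
      refine Good.mono_set hSsym hSgen ?_ g0
      rintro t rfl
      exact ⟨a * b₀, ⟨a, ha, b₀, hb₀, rfl⟩, by simp [wdist_self]⟩
    refine g1.mono_c ?_
    rw [hwb' a]
    simp only [hC, hL]
    linarith
  -- side 3 : from a to a', within ε₁ + L of P
  have good₃ : Good S C a a' P := by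
    have g0 : Good S ε₁ a a' A := h₁.good ha ha'
    have g1 : Good S (ε₁ + L) a a' P := by
      refine Good.mono_set hSsym hSgen ?_ g0
      intro t ht
      exact ⟨t * b₀, ⟨t, ht, b₀, hb₀, rfl⟩, by rw [hwb t]⟩
    exact g1.mono_c (by simp only [hC]; linarith)
  -- side 4 : from a' to a'*b₀, within L of P
  have good₄ : Good S C a' (a' * b₀) P := by
    have g0 : Good S (wdist S a' (a' * b₀) : ℝ) a' (a' * b₀) {a' * b₀} :=
      good_endpoint_right hSsym hSgen _ _
    have g1 : Good S ((wdist S a' (a' * b₀) : ℝ) + 0) a' (a' * b₀) P := by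
      refine Good.mono_set hSsym hSgen ?_ g0
      rintro t rfl
      exact ⟨a' * b₀, ⟨a', ha', b₀, hb₀, rfl⟩, by simp [wdist_self]⟩
    refine g1.mono_c ?_
    rw [hwb a']
    simp only [hC, hL]
    linarith
  -- side 5 : from a'*b₀ to a'*b', within ε₂ of P
  have good₅ : Good S C (a' * b₀) (a' * b') P := by
    have g0 : Good S ε₂ b₀ b' B := h₂.good hb₀ hb'
    have g1 := good_translate a' g0
    have g2 : Good S (ε₂ + 0) (a' * b₀) (a' * b') P := by
      refine Good.mono_set hSsym hSgen ?_ g1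
      rintro t ⟨tb, htb, rfl⟩
      exact ⟨a' * tb, ⟨a', ha', tb, htb, rfl⟩, by simp [wdist_self]⟩
    exact g2.mono_c (by linarith)
  -- combine
  have t₁ : Good S (δ + C) (a * b) a P := by
    have := (good₁.trans hSsym hSgen hslim good₂)
    exact this.mono_c (by rw [max_self])
  have t₂ : Good S (2 * δ + C) (a * b) a' P := by
    have := t₁.trans hSsym hSgen hslim good₃
    refine this.mono_c ?_
    have h1 : max (δ + C) C ≤ δ + C := max_le le_rfl (by linarith)
    linarith
  have t₃ : Good S (3 * δ + C) (a * b) (a' * b₀) P := by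
    have := t₂.trans hSsym hSgen hslim good₄
    refine this.mono_c ?_
    have h1 : max (2 * δ + C) C ≤ 2 * δ + C := max_le le_rfl (by linarith)
    linarith
  have t₄ := t₃.trans hSsym hSgen hslim good₅
  refine t₄.mono_c ?_
  have h1 : max (3 * δ + C) C ≤ 3 * δ + C := max_le le_rfl (by linarith)
  linarith

lemma prod_aux (hSsym : S⁻¹ = S) (hSgen : Subgroup.closure S = ⊤)
    (hδ : 0 ≤ δ) (hslim : SlimTriangles S δ) :
    ∀ (n : ℕ) (A : Fin n → Set G), (∀ i, ∃ ε : ℝ, 0 ≤ ε ∧ IsQuasiconvex S ε (A i)) →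
    ∃ ε : ℝ, 0 ≤ ε ∧ IsQuasiconvex S ε
      {x : G | ∃ a : Fin n → G, (∀ i, a i ∈ A i) ∧ x = (List.ofFn a).prod} := by
  intro n
  induction n with
  | zero =>
      intro A hA
      refine ⟨0, le_rfl, ?_⟩
      intro p n hp h0 hn i hi
      obtain ⟨a, _, he⟩ := h0
      obtain ⟨a', _, he'⟩ := hn
      have hp0 : p 0 = 1 := by simpa using he
      have hpn : p n = 1 := by simpa using he'
      have hn0 : n = 0 := by
        have := hp 0 n (Nat.zero_le _) le_rfl
        rw [hp0, hpn] at this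
        simpa [wdist_self] using this.symm
      subst hn0
      have hi0 : i = 0 := Nat.le_zero.mp hi
      subst hi0
      exact ⟨p 0, ⟨a, fun j => j.elim0, he⟩, by simp [wdist_self]⟩
  | succ n ih =>
      intro A hA
      obtain ⟨ε₂, hε₂, hB⟩ := ih (fun i => A i.succ) (fun i => hA i.succ)
      obtain ⟨ε₁, hε₁, hA0⟩ := hA 0
      obtain ⟨ε, hε, hq⟩ := prod_two hSsym hSgen hδ hslim hε₁ hε₂ hA0 hB
      refine ⟨ε, hε, ?_⟩
      have hset : {x : G | ∃ a : Fin (n+1) → G, (∀ i, a i ∈ A i) ∧ x = (List.ofFn a).prod}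
          = {x : G | ∃ a ∈ A 0, ∃ b ∈
              {x : G | ∃ a : Fin n → G, (∀ i, a i ∈ A i.succ) ∧ x = (List.ofFn a).prod},
              x = a * b} := by
        ext x
        constructor
        · rintro ⟨a, ha, rfl⟩
          refine ⟨a 0, ha 0, (List.ofFn (fun i : Fin n => a i.succ)).prod,
            ⟨fun i => a i.succ, fun i => ha i.succ, rfl⟩, ?_⟩
          rw [List.ofFn_succ, List.prod_cons]
        · rintro ⟨a0, ha0, b, ⟨c, hc, rfl⟩, rfl⟩
          refine ⟨Fin.cases a0 c, ?_, ?_⟩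
          · intro i
            refine Fin.cases ?_ ?_ i
            · simpa using ha0
            · intro j; simpa using hc j
          · rw [List.ofFn_succ, List.prod_cons]
            simp
      rw [hset]
      exact hq

end Main

/-- In a hyperbolic group, any finite product `A₁A₂⋯Aₙ` of quasiconvex subsets
is quasiconvex. -/
theorem finite_product_quasiconvex (S : Set G) (hSfin : S.Finite) (hSsym : S⁻¹ = S)
    (hSgen : Subgroup.closure S = ⊤) (δ : ℝ) (hδ : 0 ≤ δ) (hslim : SlimTriangles S δ)
    (n : ℕ) (A : Fin n → Set G) (hA : ∀ i, ∃ ε : ℝ, 0 ≤ ε ∧ IsQuasiconvex S ε (A i)) :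
    ∃ ε : ℝ, 0 ≤ ε ∧ IsQuasiconvex S ε
      {x : G | ∃ a : Fin n → G, (∀ i, a i ∈ A i) ∧ x = (List.ofFn a).prod} :=
  prod_aux hSsym hSgen hδ hslim n A hA
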